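/- arXiv:1708.09104 — 2 statements merged into one kernel-verified Lean document; each statement's English description precedes it below -/
import Mathlib

section
/- Let n = 1. The map (σ,w,Σ,W) ↦ (a,b,A,B) defined for σ > 0 by a = σ·cos w, b = σ·sin w, A = Σ·cos w − (W/σ)·sin w, B = Σ·sin w + (W/σ)·cos w (positions (σ,w) ↦ (a,b), momenta (Σ,W) ↦ (A,B)) is symplectic, and it transforms the rescaled thermostated Hamiltonian into a mechanical Hamiltonian with rotationally invariant logarithmic potential: W²/(2σ²) + Σ²/2 + ln σ = (A² + B²)/2 + (1/2)·ln(a² + b²). -/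
/-!
The polar map is the cotangent lift of the position map `(σ, w) ↦ (σ cos w, σ sin w)`: its
momenta are `(Σ, W)` transformed by the inverse transpose of the Jacobian
`[[cos w, -σ sin w], [sin w, σ cos w]]`, so it pulls `A da + B db` back to `Σ dσ + W dw` and
hence preserves the canonical 2-form. On the explicit Jacobian this comes down to
`cos² w + sin² w = 1`. For the Hamiltonian: `(a, b)` and `(A, B)` are the rotations by `w` of
`(σ, 0)` and `(Σ, W / σ)`, so `a² + b² = σ²` and `A² + B² = Σ² + W² / σ²`.
-/

noncomputable section

/-- Phase space of a 2-degree-of-freedom system: positions in `ℝ × ℝ`, momenta in `ℝ × ℝ`. -/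
abbrev Phase2 := (ℝ × ℝ) × (ℝ × ℝ)

/-- Euclidean pairing of a momentum covector with a position vector. -/
def pair2 (P Q : ℝ × ℝ) : ℝ := P.1 * Q.1 + P.2 * Q.2

/-- The canonical symplectic 2-form (sum over i of d(momentumᵢ) ∧ d(positionᵢ)). -/
def canonForm2 (x y : Phase2) : ℝ := pair2 x.2 y.1 - pair2 y.2 x.1

/-- A map of phase space is symplectic on a set `s` if it is differentiable at each point
of `s` and its Jacobian there preserves the canonical 2-form. -/
def IsSymplecticOn2 (f : Phase2 → Phase2) (s : Set Phase2) : Prop :=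
  ∀ x ∈ s, DifferentiableAt ℝ f x ∧
    ∀ v w : Phase2, canonForm2 (fderiv ℝ f x v) (fderiv ℝ f x w) = canonForm2 v w

/-- The polar-to-cartesian map `(σ,w,Σ,W) ↦ (a,b,A,B)`; the argument is `((σ,w),(Σ,W))`. -/
def polarMap (x : Phase2) : Phase2 :=
  ((x.1.1 * Real.cos x.1.2, x.1.1 * Real.sin x.1.2),
   (x.2.1 * Real.cos x.1.2 - (x.2.2 / x.1.1) * Real.sin x.1.2,
    x.2.1 * Real.sin x.1.2 + (x.2.2 / x.1.1) * Real.cos x.1.2))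

open Real

theorem IsSymplecticOn2.mono {f : Phase2 → Phase2} {s t : Set Phase2}
    (hf : IsSymplecticOn2 f t) (hst : s ⊆ t) : IsSymplecticOn2 f s :=
  fun x hx => hf x (hst hx)

theorem differentiableAt_polarMap {x : Phase2} (hx : x.1.1 ≠ 0) :
    DifferentiableAt ℝ polarMap x := by
  unfold polarMap
  fun_prop (disch := exact hx)

theorem fderiv_polarMap_apply {σ w S W : ℝ} (hσ : σ ≠ 0) (v : Phase2) :
    fderiv ℝ polarMap ((σ, w), (S, W)) v =
      ((v.1.1 * cos w - σ * sin w * v.1.2, v.1.1 * sin w + σ * cos w * v.1.2),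
       (v.2.1 * cos w - S * sin w * v.1.2 - (v.2.2 / σ - W * v.1.1 / σ ^ 2) * sin w
          - W / σ * cos w * v.1.2,
        v.2.1 * sin w + S * cos w * v.1.2 + (v.2.2 / σ - W * v.1.1 / σ ^ 2) * cos w
          - W / σ * sin w * v.1.2)) := by
  set x : Phase2 := ((σ, w), (S, W))
  have dσ := (hasFDerivAt_id (𝕜 := ℝ) x).fst.fst
  have dw := (hasFDerivAt_id (𝕜 := ℝ) x).fst.snd
  have dS := (hasFDerivAt_id (𝕜 := ℝ) x).snd.fst
  have dW := (hasFDerivAt_id (𝕜 := ℝ) x).snd.snd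
  have dcos := (hasDerivAt_cos w).comp_hasFDerivAt x dw
  have dsin := (hasDerivAt_sin w).comp_hasFDerivAt x dw
  have dq := dW.mul ((hasDerivAt_inv hσ).comp_hasFDerivAt x dσ)
  have h : HasFDerivAt polarMap _ x := ((dσ.mul dcos).prodMk (dσ.mul dsin)).prodMk
    (((dS.mul dcos).sub (dq.mul dsin)).prodMk ((dS.mul dsin).add (dq.mul dcos)))
  rw [h.fderiv]
  simp only [id_eq, ContinuousLinearMap.comp_id, neg_smul, smul_neg, Function.comp_apply,
    Pi.mul_apply, smul_add, ContinuousLinearMap.prod_apply, add_apply,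
    neg_apply, smul_apply, ContinuousLinearMap.comp_apply,
    ContinuousLinearMap.coe_fst', ContinuousLinearMap.coe_snd', smul_eq_mul,
    sub_apply, Prod.mk.injEq, x]
  refine ⟨⟨?_, ?_⟩, ?_, ?_⟩ <;> ring

theorem canonForm2_fderiv_polarMap {σ w S W : ℝ} (hσ : σ ≠ 0) (v u : Phase2) :
    canonForm2 (fderiv ℝ polarMap ((σ, w), (S, W)) v)
      (fderiv ℝ polarMap ((σ, w), (S, W)) u) = canonForm2 v u := by
  rw [fderiv_polarMap_apply hσ, fderiv_polarMap_apply hσ]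
  simp only [canonForm2, pair2]
  field_simp
  linear_combination (σ ^ 2 * (v.2.1 * u.1.1 - v.1.2 * u.2.2 - v.1.1 * u.2.1 + v.2.2 * u.1.2))
    * cos_sq_add_sin_sq w

theorem isSymplecticOn2_polarMap : IsSymplecticOn2 polarMap {x | x.1.1 ≠ 0} := by
  rintro ⟨⟨σ, w⟩, S, W⟩ hσ
  exact ⟨differentiableAt_polarMap hσ, canonForm2_fderiv_polarMap hσ⟩

theorem polarMap_position_normSq (x : Phase2) :
    (polarMap x).1.1 ^ 2 + (polarMap x).1.2 ^ 2 = x.1.1 ^ 2 := by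
  simp only [polarMap]
  linear_combination x.1.1 ^ 2 * cos_sq_add_sin_sq x.1.2

theorem polarMap_momentum_normSq (x : Phase2) :
    (polarMap x).2.1 ^ 2 + (polarMap x).2.2 ^ 2 = x.2.1 ^ 2 + (x.2.2 / x.1.1) ^ 2 := by
  simp only [polarMap]
  linear_combination (x.2.1 ^ 2 + (x.2.2 / x.1.1) ^ 2) * cos_sq_add_sin_sq x.1.2

theorem polar_map_symplectic_and_log_potential :
    IsSymplecticOn2 polarMap {x : Phase2 | 0 < x.1.1} ∧
    ∀ (σ w Sg W : ℝ), 0 < σ →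
      W ^ 2 / (2 * σ ^ 2) + Sg ^ 2 / 2 + Real.log σ =
        ((polarMap ((σ, w), (Sg, W))).2.1 ^ 2 + (polarMap ((σ, w), (Sg, W))).2.2 ^ 2) / 2
          + (1 / 2) * Real.log
              ((polarMap ((σ, w), (Sg, W))).1.1 ^ 2 + (polarMap ((σ, w), (Sg, W))).1.2 ^ 2) := by
  refine ⟨isSymplecticOn2_polarMap.mono fun x hx => hx.ne', fun σ w Sg W _ => ?_⟩
  rw [polarMap_momentum_normSq, polarMap_position_normSq, Real.log_pow]
  ring

end
end

section
/- Let C ∈ ℝⁿ with |C| = 1. Define the map f on {(u,v,U,V) ∈ ℝ × ℝⁿ × ℝ × ℝⁿ : u < 1, V ≠ C} by f(u,v,U,V) = (σ,w,Σ,W) with σ = (1−u)·|C−V|, w = −v − U(1−u)(C−V)/|C−V|², Σ = −U/|C−V|, W = C−V (positions (u,v) ↦ (σ,w), momenta (U,V) ↦ (Σ,W)). Then f is symplectic, and F₀(f(u,v,U,V)) = (1/2)(1−u)^{−2} + U²/(2|C−V|²) + ln(1−u) + ln|C−V| for all points of the domain. -/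
/-!
STATEMENT 3: the symplectic change of variables `f(u,v,U,V) = (σ,w,Σ,W)` given by
`σ = (1−u)|C−V|`, `w = −v − U(1−u)(C−V)/|C−V|²`, `Σ = −U/|C−V|`, `W = C−V`
(positions `(u,v) ↦ (σ,w)`, momenta `(U,V) ↦ (Σ,W)`), defined for `u < 1`, `V ≠ C`,
transforms the rescaled Nosé-thermostated free-particle Hamiltonian
`F₀(σ,w,Σ,W) = |W|²/(2σ²) + Σ²/2 + ln σ` into
`(1/2)(1−u)⁻² + U²/(2|C−V|²) + ln(1−u) + ln|C−V|`.

Phase-space points are written `((u,v),(U,V))`: positions first, then momenta.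
-/

noncomputable section

/-- Phase space: positions `(u,v) ∈ ℝ × ℝⁿ`, momenta `(U,V) ∈ ℝ × ℝⁿ`. -/
abbrev Phase (n : ℕ) := (ℝ × (Fin n → ℝ)) × (ℝ × (Fin n → ℝ))

/-- Euclidean norm on `ℝⁿ`. -/
def enorm₂ {n : ℕ} (x : Fin n → ℝ) : ℝ := Real.sqrt (∑ i, x i ^ 2)

/-- Euclidean pairing of a momentum covector with a position vector. -/
def pairP {n : ℕ} (P Q : ℝ × (Fin n → ℝ)) : ℝ := P.1 * Q.1 + ∑ i, P.2 i * Q.2 i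

/-- The canonical symplectic 2-form (sum over i of d(momentumᵢ) ∧ d(positionᵢ)). -/
def canonFormP {n : ℕ} (x y : Phase n) : ℝ := pairP x.2 y.1 - pairP y.2 x.1

/-- A map of phase space is symplectic on a set `s` if it is differentiable at each point
of `s` and its Jacobian there preserves the canonical 2-form. -/
def IsSymplecticOnP {n : ℕ} (f : Phase n → Phase n) (s : Set (Phase n)) : Prop :=
  ∀ x ∈ s, DifferentiableAt ℝ f x ∧
    ∀ v w : Phase n, canonFormP (fderiv ℝ f x v) (fderiv ℝ f x w) = canonFormP v w

/-- The rescaled Nosé-thermostated free-particle Hamiltonian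
`F₀(σ,w,Σ,W) = |W|²/(2σ²) + Σ²/2 + ln σ`; the argument is `((σ,w),(Σ,W))`. -/
def F0 {n : ℕ} (x : Phase n) : ℝ :=
  (∑ i, x.2.2 i ^ 2) / (2 * x.1.1 ^ 2) + x.2.1 ^ 2 / 2 + Real.log x.1.1

/-- The map `f(u,v,U,V) = (σ,w,Σ,W)`; the argument is `((u,v),(U,V))`. -/
def genMap {n : ℕ} (C : Fin n → ℝ) (x : Phase n) : Phase n :=
  (((1 - x.1.1) * enorm₂ (fun i => C i - x.2.2 i),
    fun i => -x.1.2 i -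
      x.2.1 * (1 - x.1.1) * (C i - x.2.2 i) / (∑ j, (C j - x.2.2 j) ^ 2)),
   (-x.2.1 / enorm₂ (fun i => C i - x.2.2 i),
    fun i => C i - x.2.2 i))

/-!
Writing `s = 1 - u`, `y = -v`, `S = -U`, `W = C - V`, the map is `x ↦ normRescale (c - x)` for
the constant point `c = ((1, 0), (0, C))`. The reflection `x ↦ c - x` has derivative `-id` and
so preserves the canonical form. The map
`normRescale (s, y, S, W) = (|W| s, y + (s S / |W|²) W, S / |W|, W)` preserves the Liouville form
`-σ dΣ - ⟨w, dW⟩` exactly, because `d|W| / |W| = ⟨W, dW⟩ / |W|²`. In the new variables `F₀`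
separates immediately.
-/

open Matrix

section

variable {n : ℕ}

lemma pairP_eq (P Q : ℝ × (Fin n → ℝ)) : pairP P Q = P.1 * Q.1 + P.2 ⬝ᵥ Q.2 := rfl

lemma canonFormP_neg (v w : Phase n) : canonFormP (-v) (-w) = canonFormP v w := by
  simp only [canonFormP, pairP_eq, Prod.fst_neg, Prod.snd_neg, neg_dotProduct, dotProduct_neg]
  ring

lemma sum_sq_ne_zero {W : Fin n → ℝ} (hW : W ≠ 0) : ∑ j, W j ^ 2 ≠ 0 := by
  simpa [dotProduct, sq] using dotProduct_self_eq_zero.not.mpr hW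

lemma enorm₂_sq (W : Fin n → ℝ) : enorm₂ W ^ 2 = ∑ j, W j ^ 2 :=
  Real.sq_sqrt (Finset.sum_nonneg fun j _ => sq_nonneg (W j))

lemma enorm₂_ne_zero {W : Fin n → ℝ} (hW : W ≠ 0) : enorm₂ W ≠ 0 :=
  Real.sqrt_ne_zero'.mpr
    ((Finset.sum_nonneg fun j _ => sq_nonneg (W j)).lt_of_ne' (sum_sq_ne_zero hW))

lemma IsSymplecticOnP.mono {f : Phase n → Phase n} {s t : Set (Phase n)}
    (hf : IsSymplecticOnP f s) (hts : t ⊆ s) : IsSymplecticOnP f t :=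
  fun x hx => hf x (hts hx)

lemma IsSymplecticOnP.comp_const_sub {f : Phase n → Phase n} {s : Set (Phase n)}
    (hf : IsSymplecticOnP f s) (c : Phase n) :
    IsSymplecticOnP (fun x => f (c - x)) ((c - ·) ⁻¹' s) := by
  intro x hx
  obtain ⟨hdiff, hform⟩ := hf (c - x) hx
  have hderiv : HasFDerivAt (fun x => f (c - x))
      ((fderiv ℝ f (c - x)).comp (-ContinuousLinearMap.id ℝ _)) x :=
    hdiff.hasFDerivAt.comp x ((hasFDerivAt_id x).const_sub c)
  refine ⟨hderiv.differentiableAt, fun v w => ?_⟩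
  simpa [hderiv.fderiv, canonFormP_neg] using hform (-v) (-w)

lemma hasDerivAt_add_smul {E : Type*} [NormedAddCommGroup E] [NormedSpace ℝ E] (a b : E) :
    HasDerivAt (fun t : ℝ => a + t • b) b 0 := by
  simpa using ((hasDerivAt_id (0 : ℝ)).smul_const b).const_add a

def normRescale (x : Phase n) : Phase n :=
  ((x.1.1 * enorm₂ x.2.2, x.1.2 + (x.2.1 * x.1.1 / ∑ j, x.2.2 j ^ 2) • x.2.2),
   (x.2.1 / enorm₂ x.2.2, x.2.2))

def normRescaleDeriv (x ξ : Phase n) : Phase n :=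
  ((ξ.1.1 * enorm₂ x.2.2 + x.1.1 * (x.2.2 ⬝ᵥ ξ.2.2) / enorm₂ x.2.2,
    ξ.1.2 + ((ξ.2.1 * x.1.1 + x.2.1 * ξ.1.1) / (∑ j, x.2.2 j ^ 2)
      - 2 * x.2.1 * x.1.1 * (x.2.2 ⬝ᵥ ξ.2.2) / (∑ j, x.2.2 j ^ 2) ^ 2) • x.2.2
      + (x.2.1 * x.1.1 / ∑ j, x.2.2 j ^ 2) • ξ.2.2),
   (ξ.2.1 / enorm₂ x.2.2 - x.2.1 * (x.2.2 ⬝ᵥ ξ.2.2) / enorm₂ x.2.2 ^ 3, ξ.2.2))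

lemma differentiableAt_normRescale {x : Phase n} (hW : x.2.2 ≠ 0) :
    DifferentiableAt ℝ normRescale x := by
  have hq := sum_sq_ne_zero hW
  have hr := enorm₂_ne_zero hW
  unfold normRescale enorm₂ at *
  refine (DifferentiableAt.prodMk ?_ ?_).prodMk (DifferentiableAt.prodMk ?_ ?_) <;>
    fun_prop (disch := assumption)

lemma hasLineDerivAt_normRescale {x : Phase n} (hW : x.2.2 ≠ 0) (ξ : Phase n) :
    HasLineDerivAt ℝ normRescale (normRescaleDeriv x ξ) x ξ := by
  have hq := sum_sq_ne_zero hW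
  have hr := enorm₂_ne_zero hW
  have hs := hasDerivAt_add_smul x.1.1 ξ.1.1
  have hy := hasDerivAt_add_smul x.1.2 ξ.1.2
  have hS := hasDerivAt_add_smul x.2.1 ξ.2.1
  have hW' := hasDerivAt_add_smul x.2.2 ξ.2.2
  have hsq : HasDerivAt (fun t : ℝ => ∑ j, (x.2.2 + t • ξ.2.2) j ^ 2)
      (2 * (x.2.2 ⬝ᵥ ξ.2.2)) 0 := by
    have := HasDerivAt.fun_sum fun j (_ : j ∈ Finset.univ) => (hasDerivAt_pi.mp hW' j).pow 2
    simpa [dotProduct, Finset.mul_sum, mul_assoc] using this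
  have hnorm := hsq.sqrt (by simpa using hq)
  have hderiv := ((hs.fun_mul hnorm).prodMk
    (hy.fun_add (((hS.fun_mul hs).fun_div hsq (by simpa using hq)).fun_smul hW'))).prodMk
    ((hS.fun_div hnorm (by simpa [enorm₂] using hr)).prodMk hW')
  refine hderiv.congr_deriv ?_
  unfold normRescaleDeriv enorm₂ at *
  simp only [zero_smul, zero_mul, add_zero, smul_eq_mul, Prod.mk.injEq]
  refine ⟨⟨by field_simp, ?_⟩, by field_simp, trivial⟩
  rw [add_assoc, add_comm (_ • x.2.2)]
  congr 3
  field_simp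

lemma fderiv_normRescale_apply {x : Phase n} (hW : x.2.2 ≠ 0) (ξ : Phase n) :
    fderiv ℝ normRescale x ξ = normRescaleDeriv x ξ := by
  rw [← (differentiableAt_normRescale hW).lineDeriv_eq_fderiv,
    (hasLineDerivAt_normRescale hW ξ).lineDeriv]

lemma canonFormP_normRescaleDeriv {x : Phase n} (hW : x.2.2 ≠ 0) (ξ η : Phase n) :
    canonFormP (normRescaleDeriv x ξ) (normRescaleDeriv x η) = canonFormP ξ η := by
  have hr := enorm₂_ne_zero hW
  simp only [canonFormP, pairP_eq, normRescaleDeriv, dotProduct_add, dotProduct_smul,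
    smul_eq_mul, ← enorm₂_sq]
  rw [dotProduct_comm ξ.2.2 x.2.2, dotProduct_comm η.2.2 x.2.2, dotProduct_comm η.2.2 ξ.2.2]
  field_simp
  ring

lemma isSymplecticOnP_normRescale : IsSymplecticOnP normRescale {x : Phase n | x.2.2 ≠ 0} :=
  fun _ hW => ⟨differentiableAt_normRescale hW, fun ξ η => by
    rw [fderiv_normRescale_apply hW, fderiv_normRescale_apply hW,
      canonFormP_normRescaleDeriv hW]⟩

lemma F0_normRescale {x : Phase n} (hs : 0 < x.1.1) (hW : x.2.2 ≠ 0) :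
    F0 (normRescale x) = (1 / 2) * (x.1.1 ^ 2)⁻¹ + x.2.1 ^ 2 / (2 * ∑ j, x.2.2 j ^ 2)
      + Real.log x.1.1 + Real.log (enorm₂ x.2.2) := by
  have hr := enorm₂_ne_zero hW
  simp only [F0, normRescale, ← enorm₂_sq]
  rw [Real.log_mul hs.ne' hr]
  field_simp
  ring

lemma genMap_eq_normRescale (C : Fin n → ℝ) (x : Phase n) :
    genMap C x = normRescale (((1, 0), (0, C)) - x) := by
  ext <;> simp [genMap, normRescale, Pi.sub_def]
  ring

end

theorem genMap_symplectic_and_transforms_F0_general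
    (n : ℕ) (C : Fin n → ℝ) :
    IsSymplecticOnP (genMap C) {x : Phase n | x.1.1 < 1 ∧ x.2.2 ≠ C} ∧
    ∀ (u : ℝ) (v : Fin n → ℝ) (U : ℝ) (V : Fin n → ℝ), u < 1 → V ≠ C →
      F0 (genMap C ((u, v), (U, V))) =
        (1 / 2) * ((1 - u) ^ 2)⁻¹ + U ^ 2 / (2 * ∑ i, (C i - V i) ^ 2)
          + Real.log (1 - u) + Real.log (enorm₂ (fun i => C i - V i)) := by
  have hgenMap : genMap C = fun x => normRescale (((1, 0), (0, C)) - x) :=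
    funext (genMap_eq_normRescale C)
  refine ⟨?_, fun u v U V hu hV => ?_⟩
  · rw [hgenMap]
    refine (isSymplecticOnP_normRescale.comp_const_sub _).mono fun x hx => ?_
    simpa [sub_eq_zero, eq_comm] using hx.2
  · rw [genMap_eq_normRescale,
      F0_normRescale (by simpa using hu) (by simpa [sub_eq_zero, eq_comm] using hV)]
    simp [Pi.sub_def]

theorem genMap_symplectic_and_transforms_F0
    (n : ℕ) (C : Fin n → ℝ) (hC : ∑ i, C i ^ 2 = 1) :
    IsSymplecticOnP (genMap C) {x : Phase n | x.1.1 < 1 ∧ x.2.2 ≠ C} ∧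
    ∀ (u : ℝ) (v : Fin n → ℝ) (U : ℝ) (V : Fin n → ℝ), u < 1 → V ≠ C →
      F0 (genMap C ((u, v), (U, V))) =
        (1 / 2) * ((1 - u) ^ 2)⁻¹ + U ^ 2 / (2 * ∑ i, (C i - V i) ^ 2)
          + Real.log (1 - u) + Real.log (enorm₂ (fun i => C i - V i)) :=
  genMap_symplectic_and_transforms_F0_general n C
end
end
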